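/- arXiv:math/0404430 — 4 statements merged into one kernel-verified Lean document; each statement's English description precedes it below -/
import Mathlib

section
/- Let n = k. Then every X ∈ 𝒳_k(d,k) satisfies |ret_k(X)| = d, and ℱ(d,k,k) is exactly the collection of d-element Gale subsets of [0,k] (these are the vertex sets of facets of the cyclic d-polytope with k+1 vertices). -/
noncomputable section

open Finset

/-- `retr n X` : the retraction of `X`, clamping each element into `[0,n]`. -/
def retr (n : ℤ) (X : Finset ℤ) : Finset ℤ := X.image fun x => max 0 (min n x)

/-- A finite set is paired if it is a disjoint union of pairs `{y, y+1}`
of consecutive integers. -/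
def IsPaired (Y : Finset ℤ) : Prop :=
  ∃ S : Finset ℤ, Y = S ∪ S.image (· + 1) ∧ ∀ a ∈ S, ∀ b ∈ S, a ≠ b → 2 ≤ |a - b|

/-- Membership in the collection `𝒳_n(d,k)` where `d = 2m+1`:
`X = [i, i+2r-1] ∪ Y ∪ [i+k, i+k+2r-1]` with `1 ≤ r ≤ m`, `Y` a paired
`(d-2r-1)`-element subset of `[i+2r+1, i+k-2]`, and `|ret_n(X)| ≥ d`. -/
def MemX (m k n : ℕ) (X : Finset ℤ) : Prop :=
  ∃ (i : ℤ) (r : ℕ) (Y : Finset ℤ), 1 ≤ r ∧ r ≤ m ∧ IsPaired Y ∧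
    Y.card = 2 * (m - r) ∧ Y ⊆ Finset.Icc (i + 2 * r + 1) (i + k - 2) ∧
    X = Finset.Icc i (i + 2 * r - 1) ∪ Y ∪ Finset.Icc (i + k) (i + k + 2 * r - 1) ∧
    2 * m + 1 ≤ (retr n X).card

/-- `ℱ(d,k,n)` with `d = 2m+1` : the vertex sets of facets of the ordinary
polytope `P^{d,k,n}` (Dinh's theorem). -/
def Facets (m k n : ℕ) : Set (Finset ℤ) :=
  {F | ∃ X : Finset ℤ, MemX m k n X ∧ F = retr n X}

/-- Colexicographic order on finite sets of integers: `F ≺_c G` iff the maximal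
element of the symmetric difference belongs to `G`. -/
def ColexLt (F G : Finset ℤ) : Prop :=
  ∃ z ∈ G, z ∉ F ∧ ∀ w, z < w → (w ∈ F ↔ w ∈ G)

/-- `S` is a Gale subset of `[a,b]`: `S ⊆ [a,b]` and between any two elements of
`[a,b] \ S` there is an even number of elements of `S`. -/
def IsGale (a b : ℤ) (S : Finset ℤ) : Prop :=
  S ⊆ Finset.Icc a b ∧
    ∀ x ∈ Finset.Icc a b, ∀ y ∈ Finset.Icc a b,
      x ∉ S → y ∉ S → x < y → Even ((S ∩ Finset.Ioo x y).card)

/-- The maximal interval (run) of consecutive integers of `F` containing `x`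
(empty if `x ∉ F`). -/
def runOf (F : Finset ℤ) (x : ℤ) : Finset ℤ :=
  F.filter fun y => Finset.Icc (min x y) (max x y) ⊆ F

/-- The maximum element of `F` (0 by convention if `F` is empty). -/
def maxElt (F : Finset ℤ) : ℤ := WithBot.unbotD 0 F.max

/-- `E(S)` : the union over the maximal intervals `[a,b]` of `S` of
`{a+1, a+3, a+5, …} ∩ [a,b]` (the elements in even position of their run). -/
def Epos (S : Finset ℤ) : Finset ℤ :=
  @Finset.filter _
    (fun y => ∃ a : ℤ, Finset.Icc a y ⊆ S ∧ a - 1 ∉ S ∧ Odd (y - a))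
    (Classical.decPred _) S

/-- `A^0(F)` for `F ∈ ℱ(d,k,n)`. -/
def A0 (k n : ℤ) (F : Finset ℤ) : Finset ℤ :=
  if maxElt F ≤ k - 1 then runOf F 0
  else if maxElt F ≤ n - 1 then runOf F (maxElt F - k) ∪ runOf F (maxElt F - k + 2)
  else if n - k ∈ F then runOf F (n - k)
  else ∅

/-- `G_F = E(I^1) ∪ ⋯ ∪ E(I^p) ∪ I^n(F)` where `I^1, …, I^p` are the maximal
intervals of `F` disjoint from `A^0(F) ∪ I^n(F)`, and `I^n(F) = runOf F n`. -/
def GF (k n : ℤ) (F : Finset ℤ) : Finset ℤ :=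
  Epos (F \ (A0 k n F ∪ runOf F n)) ∪ runOf F n

/-- The `t`-th smallest element of `F` (1-indexed). -/
def elt (F : Finset ℤ) (t : ℕ) : ℤ := (F.sort (· ≤ ·)).getD (t - 1) 0

/-- The vertex set of the `t`-th ridge of `P^{d,k,n}` contained in the facet `F`
(with `F = {z_1 < ⋯ < z_p}`, `1 ≤ t ≤ p`):
`F(ẑ_1) = {z_1, …, z_{d-1}}`, `F(ẑ_p) = {z_{p-d+2}, …, z_p}`, and otherwise
`F(ẑ_t) = {z_ℓ : 0 < |ℓ - t| ≤ d-2}`. -/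
def ridge (d : ℕ) (F : Finset ℤ) (t : ℕ) : Finset ℤ :=
  if t = 1 then (Finset.Icc 1 (d - 1)).image (elt F)
  else if t = F.card then (Finset.Icc (F.card - d + 2) F.card).image (elt F)
  else ((Finset.Icc 1 F.card).filter fun l =>
      l ≠ t ∧ ((l : ℤ) - (t : ℤ)).natAbs ≤ d - 2).image (elt F)

/-- `T_{F,ℓ} = {z_ℓ, z_{ℓ+1}, …, z_{ℓ+d-1}}` : the `d` consecutive elements of
`F` starting at position `ℓ` (1-indexed). -/
def Tsimp (d : ℕ) (F : Finset ℤ) (l : ℕ) : Finset ℤ :=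
  (Finset.Icc l (l + d - 1)).image (elt F)

/-- Helper for `U_{F,ℓ}`: `Uaux m k n F j = U_{F, (p-d+1)-j}` where `p = |F|`,
`d = 2m+1`. -/
def Uaux (m k n : ℕ) (F : Finset ℤ) : ℕ → Finset ℤ
  | 0 => GF k n F
  | j + 1 =>
    (Uaux m k n F j \ {maxElt (Tsimp (2 * m + 1) F (F.card - (2 * m + 1) + 1 - j))}) ∪
      {maxElt (Tsimp (2 * m + 1) F (F.card - (2 * m + 1) + 1 - j)) - (k : ℤ),
       maxElt (Tsimp (2 * m + 1) F (F.card - (2 * m + 1) + 1 - j)) - 1}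

/-- `U_{F,ℓ}` : `U_{F,p-d+1} = G_F` and, for `1 ≤ ℓ ≤ p-d`,
`U_{F,ℓ} = (U_{F,ℓ+1} \ {z}) ∪ {z-k, z-1}` where `z = max T_{F,ℓ+1}`. -/
def Usimp (m k n : ℕ) (F : Finset ℤ) (l : ℕ) : Finset ℤ :=
  Uaux m k n F (F.card - (2 * m + 1) + 1 - l)

/-!
A finite set `Y ⊆ ℤ` is paired exactly when every non-element of `Y` has an even number of
elements of `Y` below it (the first element of each pair being the one with an even number of
elements below it), i.e. exactly when `Y` is a Gale subset of all of `ℤ`.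

Every `X ∈ 𝒳_k(d,k)` is paired, being a disjoint union of two intervals of length `2r` and the
paired set `Y`; since `ret_k` is the identity strictly between two points of `[0,k]`, the set
`ret_k(X)` is Gale. The two intervals lie `k` apart, so they clamp to at most `2r + 1` points,
which forces `|ret_k(X)| = d`.

Conversely, a Gale subset `S` of `[0,k]` of odd size `d ≤ k` contains `0` or `k`, since otherwise
the Gale condition between `0` and `k` makes `|S|` even. If it contains both, its runs at `0` and
at `k` are the clamped intervals, of total length `2r + 1`. If it contains only `k` (only `0`),
its first (last) run has even length `2r` and is the first (second) interval, the other one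
clamping to `{k}` (to `{0}`). In each case the rest of `S` is cut off by a non-element and has
even size, so the Gale condition makes it paired: it is `Y`.
-/

lemma card_union_image_add_one {S : Finset ℤ} (hS : ∀ a ∈ S, ∀ b ∈ S, a ≠ b → 2 ≤ |a - b|) :
    #(S ∪ S.image (· + 1)) = 2 * #S := by
  rw [card_union_of_disjoint, card_image_of_injective _ (add_left_injective 1), two_mul]
  refine disjoint_left.2 fun a ha ha' => ?_
  obtain ⟨b, hb, rfl⟩ := mem_image.1 ha'
  have := hS _ ha _ hb (by omega)
  simp at this

lemma card_filter_lt_add_card_inter_Ioo {Y : Finset ℤ} {x y : ℤ} (hx : x ∉ Y) (hxy : x ≤ y) :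
    #(Y.filter (· < x)) + #(Y ∩ Ioo x y) = #(Y.filter (· < y)) := by
  rw [← card_union_of_disjoint (disjoint_left.2 fun z hz hz' => by
    simp only [mem_filter, mem_inter, mem_Ioo] at hz hz'; omega)]
  congr 1
  ext z
  simp only [mem_union, mem_filter, mem_inter, mem_Ioo]
  have : z ∈ Y → z ≠ x := fun hz h => hx (h ▸ hz)
  grind

lemma card_filter_lt_add_one {Y : Finset ℤ} {z : ℤ} (hz : z ∈ Y) :
    #(Y.filter (· < z + 1)) = #(Y.filter (· < z)) + 1 := by
  rw [← card_insert_of_notMem (by simp : z ∉ Y.filter (· < z))]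
  congr 1
  ext w
  simp only [mem_filter, mem_insert]
  grind

lemma IsPaired.even_card_filter_lt {Y : Finset ℤ} (hY : IsPaired Y) {t : ℤ} (ht : t ∉ Y) :
    Even #(Y.filter (· < t)) := by
  obtain ⟨S, rfl, hS⟩ := hY
  have hsplit : (S ∪ S.image (· + 1)).filter (· < t) =
      S.filter (· < t) ∪ (S.filter (· < t)).image (· + 1) := by
    ext z
    simp only [mem_filter, mem_union, mem_image] at ht ⊢
    grind
  rw [hsplit, card_union_image_add_one fun a ha b hb =>
    hS a (mem_filter.1 ha).1 b (mem_filter.1 hb).1]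
  exact even_two_mul _

lemma isPaired_of_even_card_filter_lt {Y : Finset ℤ}
    (h : ∀ t ∉ Y, Even #(Y.filter (· < t))) : IsPaired Y := by
  have hsucc : ∀ y ∈ Y, Even #(Y.filter (· < y)) → y + 1 ∈ Y := fun y hy hev => by
    by_contra hy'
    have := h _ hy'
    rw [card_filter_lt_add_one hy, Nat.even_add_one] at this
    exact this hev
  have hpred : ∀ y ∈ Y, ¬ Even #(Y.filter (· < y)) →
      y - 1 ∈ Y ∧ Even #(Y.filter (· < y - 1)) := by
    intro y hy hodd
    have hy' : y - 1 ∈ Y := by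
      by_contra hy'
      have := card_filter_lt_add_card_inter_Ioo (y := y) hy' (by omega)
      rw [show Ioo (y - 1) y = ∅ by ext; simp, inter_empty, card_empty, add_zero] at this
      exact hodd (this ▸ h _ hy')
    have := card_filter_lt_add_one hy'
    rw [sub_add_cancel] at this
    rw [this, Nat.even_add_one, not_not] at hodd
    exact ⟨hy', hodd⟩
  refine ⟨Y.filter fun y => Even #(Y.filter (· < y)), ?_, fun a ha b hb hab => ?_⟩
  · ext y
    simp only [mem_union, mem_filter, mem_image]
    constructor
    · intro hy
      by_cases hev : Even #(Y.filter (· < y))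
      · exact Or.inl ⟨hy, hev⟩
      · exact Or.inr ⟨y - 1, hpred y hy hev, by ring⟩
    · rintro (⟨hy, -⟩ | ⟨x, ⟨hx, hev⟩, rfl⟩)
      · exact hy
      · exact hsucc x hx hev
  · simp only [mem_filter] at ha hb
    by_contra hlt
    rw [not_le, abs_lt] at hlt
    have hodd : ∀ x ∈ Y, Even #(Y.filter (· < x)) → ¬ Even #(Y.filter (· < x + 1)) :=
      fun x hx hev => by rw [card_filter_lt_add_one hx, Nat.even_add_one, not_not]; exact hev
    rcases (by omega : b = a + 1 ∨ a = b + 1) with rfl | rfl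
    · exact hodd a ha.1 ha.2 hb.2
    · exact hodd b hb.1 hb.2 ha.2

lemma IsPaired.even_card_inter_Ioo {Y : Finset ℤ} (hY : IsPaired Y) {x y : ℤ} (hx : x ∉ Y)
    (hy : y ∉ Y) : Even #(Y ∩ Ioo x y) := by
  rcases le_or_gt x y with hxy | hxy
  · have := card_filter_lt_add_card_inter_Ioo hx hxy
    exact (Nat.even_add.1 (this ▸ hY.even_card_filter_lt hy)).1 (hY.even_card_filter_lt hx)
  · rw [Ioo_eq_empty (by omega), inter_empty, card_empty]
    exact Even.zero

lemma IsPaired.union {Y₁ Y₂ : Finset ℤ} (h₁ : IsPaired Y₁) (h₂ : IsPaired Y₂)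
    (hd : Disjoint Y₁ Y₂) : IsPaired (Y₁ ∪ Y₂) :=
  isPaired_of_even_card_filter_lt fun t ht => by
    rw [mem_union, not_or] at ht
    rw [filter_union, card_union_of_disjoint (disjoint_filter_filter hd)]
    exact (h₁.even_card_filter_lt ht.1).add (h₂.even_card_filter_lt ht.2)

lemma isPaired_Icc (i : ℤ) (r : ℕ) : IsPaired (Icc i (i + 2 * r - 1)) :=
  isPaired_of_even_card_filter_lt fun t ht => by
    rw [mem_Icc] at ht
    rcases not_and_or.1 ht with ht | ht
    · rw [filter_false_of_mem fun z hz => by rw [mem_Icc] at hz; omega, card_empty]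
      exact Even.zero
    · rw [filter_true_of_mem fun z hz => by rw [mem_Icc] at hz; omega, Int.card_Icc]
      exact ⟨r, by omega⟩

lemma isPaired_inter_Ioo {S : Finset ℤ} {u v : ℤ} (hev : Even #(S ∩ Ioo u v))
    (hmid : ∀ t ∉ S, u < t → t < v → Even #((S ∩ Ioo u v).filter (· < t))) :
    IsPaired (S ∩ Ioo u v) :=
  isPaired_of_even_card_filter_lt fun t ht => by
    by_cases htu : t ≤ u
    · rw [filter_false_of_mem fun z hz => by simp only [mem_inter, mem_Ioo] at hz; omega,
        card_empty]
      exact Even.zero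
    by_cases hvt : v ≤ t
    · rwa [filter_true_of_mem fun z hz => by simp only [mem_inter, mem_Ioo] at hz; omega]
    exact hmid t (fun hS => ht (mem_inter.2 ⟨hS, mem_Ioo.2 ⟨by omega, by omega⟩⟩))
      (by omega) (by omega)

lemma inter_Ioo_filter_lt (S : Finset ℤ) {u v t : ℤ} (htv : t ≤ v) :
    (S ∩ Ioo u v).filter (· < t) = S ∩ Ioo u t := by
  ext z
  simp only [mem_filter, mem_inter, mem_Ioo]
  grind

namespace IsGale

variable {a b u v : ℤ} {S : Finset ℤ}

lemma isPaired_inter_Ioo_of_notMem_left (hG : IsGale a b S) (hu : u ∈ Icc a b) (huS : u ∉ S)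
    (hv : v ≤ b + 1) (hev : Even #(S ∩ Ioo u v)) : IsPaired (S ∩ Ioo u v) :=
  isPaired_inter_Ioo hev fun t htS hut htv => by
    rw [mem_Icc] at hu
    rw [inter_Ioo_filter_lt S htv.le]
    exact hG.2 u (mem_Icc.2 hu) t (mem_Icc.2 ⟨by omega, by omega⟩) huS htS hut

lemma isPaired_inter_Ioo_of_notMem_right (hG : IsGale a b S) (hv : v ∈ Icc a b) (hvS : v ∉ S)
    (hu : a - 1 ≤ u) (hev : Even #(S ∩ Ioo u v)) : IsPaired (S ∩ Ioo u v) :=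
  isPaired_inter_Ioo hev fun t htS hut htv => by
    rw [mem_Icc] at hv
    have hsplit := card_filter_lt_add_card_inter_Ioo (Y := S ∩ Ioo u v)
      (fun h => htS (mem_inter.1 h).1) htv.le
    rw [show S ∩ Ioo u v ∩ Ioo t v = S ∩ Ioo t v by ext; simp only [mem_inter, mem_Ioo]; grind,
      inter_Ioo_filter_lt S le_rfl] at hsplit
    have := hG.2 t (mem_Icc.2 ⟨by omega, by omega⟩) v (mem_Icc.2 hv) htS hvS htv
    exact (Nat.even_add.1 (hsplit ▸ hev)).2 this

end IsGale

lemma retr_union (k : ℤ) (X Y : Finset ℤ) : retr k (X ∪ Y) = retr k X ∪ retr k Y :=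
  image_union _ _

lemma retr_Icc (k : ℤ) {a b : ℤ} (hab : a ≤ b) :
    retr k (Icc a b) = Icc (max 0 (min k a)) (max 0 (min k b)) := by
  ext z
  simp only [retr, mem_image, mem_Icc]
  constructor
  · rintro ⟨w, hw, rfl⟩
    omega
  · exact fun hz => ⟨max a (min b z), by omega, by omega⟩

lemma retr_eq_self {k : ℤ} {Y : Finset ℤ} (hY : Y ⊆ Icc 0 k) : retr k Y = Y := by
  conv_rhs => rw [← image_id (s := Y)]
  refine image_congr fun y hy => ?_
  have := mem_Icc.1 (hY hy)
  simp only [id]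
  omega

lemma IsPaired.isGale_retr {X : Finset ℤ} (hX : IsPaired X) {k : ℤ} (hk : 0 ≤ k) :
    IsGale 0 k (retr k X) := by
  refine ⟨fun z hz => ?_, fun x hx y hy hxF hyF hxy => ?_⟩
  · obtain ⟨w, -, rfl⟩ := mem_image.1 hz
    exact mem_Icc.2 ⟨by omega, by omega⟩
  rw [mem_Icc] at hx hy
  have hnot : ∀ t, 0 ≤ t → t ≤ k → t ∉ retr k X → t ∉ X :=
    fun t h0 htk ht htX => ht (mem_image.2 ⟨t, htX, by omega⟩)
  have hinter : retr k X ∩ Ioo x y = X ∩ Ioo x y := by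
    ext z
    simp only [retr, mem_inter, mem_image, mem_Ioo]
    constructor
    · rintro ⟨⟨w, hw, rfl⟩, h⟩
      have hw' : max 0 (min k w) = w := by omega
      rw [hw'] at h ⊢
      exact ⟨hw, h⟩
    · rintro ⟨hz, h⟩
      exact ⟨⟨z, hz, by omega⟩, h⟩
  rw [hinter]
  exact hX.even_card_inter_Ioo (hnot x hx.1 hx.2 hxF) (hnot y hy.1 hy.2 hyF)

namespace MemX

variable {m k n : ℕ} {X : Finset ℤ}

lemma isPaired (hX : MemX m k n X) (hk : 2 * m ≤ k) : IsPaired X := by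
  obtain ⟨i, r, Y, -, hrm, hY, -, hYsub, rfl, -⟩ := hX
  have hYmem : ∀ y ∈ Y, i + 2 * r + 1 ≤ y ∧ y ≤ i + k - 2 := fun y hy => mem_Icc.1 (hYsub hy)
  refine ((isPaired_Icc i r).union hY ?_).union (isPaired_Icc (i + k) r) ?_
  · exact disjoint_left.2 fun z hz hzY => by
      have := hYmem z hzY; rw [mem_Icc] at hz; omega
  · refine disjoint_left.2 fun z hz hz' => ?_
    rw [mem_Icc] at hz'
    rcases mem_union.1 hz with hz | hz
    · rw [mem_Icc] at hz; omega
    · have := hYmem z hz; omega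

lemma card_retr_le (hX : MemX m k n X) : #(retr k X) ≤ 2 * m + 1 := by
  obtain ⟨i, r, Y, hr, hrm, -, hYcard, -, rfl, -⟩ := hX
  set A := Icc i (i + 2 * r - 1)
  set B := Icc (i + k) (i + k + 2 * r - 1)
  have hAB : #(retr k A ∪ retr k B) ≤ 2 * r + 1 := by
    refine (card_union_le _ _).trans ?_
    rw [retr_Icc _ (by omega), retr_Icc _ (by omega), Int.card_Icc, Int.card_Icc]
    omega
  calc #(retr k (A ∪ Y ∪ B))
      ≤ #(retr k A ∪ retr k B) + #(retr k Y) := by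
        rw [retr_union, retr_union, union_right_comm]
        exact card_union_le _ _
    _ ≤ 2 * r + 1 + 2 * (m - r) := add_le_add hAB (hYcard ▸ card_image_le)
    _ = 2 * m + 1 := by omega

lemma card_retr_eq (hX : MemX m k k X) : #(retr k X) = 2 * m + 1 :=
  hX.card_retr_le.antisymm <| by
    obtain ⟨-, -, -, -, -, -, -, -, -, h⟩ := hX
    exact h

end MemX

lemma exists_gap_above (S : Finset ℤ) (a : ℤ) : ∃ w, a ≤ w ∧ w ∉ S ∧ Icc a (w - 1) ⊆ S := by
  obtain ⟨z, hz, hzS⟩ := ((Set.Ici_infinite a).sdiff S.finite_toSet).nonempty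
  obtain ⟨w, ⟨haw, hwS⟩, hmin⟩ := Int.exists_least_of_bdd (P := fun z => a ≤ z ∧ z ∉ S)
    ⟨a, fun _ h => h.1⟩ ⟨z, hz, hzS⟩
  refine ⟨w, haw, hwS, fun t ht => ?_⟩
  rw [mem_Icc] at ht
  by_contra htS
  have := hmin t ⟨ht.1, htS⟩
  omega

lemma exists_gap_below (S : Finset ℤ) (b : ℤ) : ∃ w ≤ b, w ∉ S ∧ Icc (w + 1) b ⊆ S := by
  obtain ⟨z, hz, hzS⟩ := ((Set.Iic_infinite b).sdiff S.finite_toSet).nonempty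
  obtain ⟨w, ⟨hwb, hwS⟩, hmax⟩ := Int.exists_greatest_of_bdd (P := fun z => z ≤ b ∧ z ∉ S)
    ⟨b, fun _ h => h.1⟩ ⟨z, hz, hzS⟩
  refine ⟨w, hwb, hwS, fun t ht => ?_⟩
  rw [mem_Icc] at ht
  by_contra htS
  have := hmax t ⟨ht.2, htS⟩
  omega

lemma card_Icc_union_union_Icc {Y : Finset ℤ} {α β γ δ : ℤ} (hY : Y ⊆ Ioo β γ) (hβγ : β < γ) :
    #(Icc α β ∪ Y ∪ Icc γ δ) = (β + 1 - α).toNat + #Y + (δ + 1 - γ).toNat := by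
  have hmem : ∀ y ∈ Y, β < y ∧ y < γ := fun y hy => mem_Ioo.1 (hY hy)
  rw [card_union_of_disjoint, card_union_of_disjoint, Int.card_Icc, Int.card_Icc]
  · exact disjoint_left.2 fun z hz hzY => by have := hmem z hzY; rw [mem_Icc] at hz; omega
  · refine disjoint_left.2 fun z hz hz' => ?_
    rw [mem_Icc] at hz'
    rcases mem_union.1 hz with hz | hz
    · rw [mem_Icc] at hz; omega
    · have := hmem z hz; omega

section Facets

variable {m k : ℕ} {S : Finset ℤ}

lemma mem_facets_of_eq_union {Y : Finset ℤ} {i α β γ δ : ℤ} {r : ℕ} (hr : 1 ≤ r) (hrm : r ≤ m)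
    (hY : IsPaired Y) (hYcard : #Y = 2 * (m - r)) (hYsub : Y ⊆ Icc (i + 2 * r + 1) (i + k - 2))
    (hYk : Y ⊆ Icc 0 k)
    (hα : max 0 (min (k : ℤ) i) = α) (hβ : max 0 (min (k : ℤ) (i + 2 * r - 1)) = β)
    (hγ : max 0 (min (k : ℤ) (i + k)) = γ) (hδ : max 0 (min (k : ℤ) (i + k + 2 * r - 1)) = δ)
    (hSeq : S = Icc α β ∪ Y ∪ Icc γ δ) (hS : #S = 2 * m + 1) : S ∈ Facets m k k := by
  have hX : retr k (Icc i (i + 2 * r - 1) ∪ Y ∪ Icc (i + k) (i + k + 2 * r - 1)) = S := by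
    rw [retr_union, retr_union, retr_Icc _ (by omega), retr_Icc _ (by omega), retr_eq_self hYk,
      hα, hβ, hγ, hδ, hSeq]
  exact ⟨_, ⟨i, r, Y, hr, hrm, hY, hYcard, hYsub, rfl, hX ▸ hS.ge⟩, hX.symm⟩

lemma mem_facets_of_zero_mem_of_k_mem (hG : IsGale 0 k S) (hS : #S = 2 * m + 1)
    (hk : 2 * m + 1 ≤ k) (h0 : 0 ∈ S) (hkS : (k : ℤ) ∈ S) : S ∈ Facets m k k := by
  have hSk : ∀ z ∈ S, 0 ≤ z ∧ z ≤ k := fun z hz => mem_Icc.1 (hG.1 hz)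
  obtain ⟨u, hu0, huS, hu⟩ := exists_gap_above S 0
  obtain ⟨v, hvk, hvS, hv⟩ := exists_gap_below S k
  have hu1 : u ≠ 0 := fun h => huS (h ▸ h0)
  have hvk' : v ≠ k := fun h => hvS (h ▸ hkS)
  have huv : u ≤ v := by
    by_contra! h
    have := card_le_card (s := Icc 0 (k : ℤ)) fun z hz => by
      rw [mem_Icc] at hz
      rcases le_or_gt z v with hzv | hzv
      exacts [hu (mem_Icc.2 ⟨hz.1, by omega⟩), hv (mem_Icc.2 ⟨hzv, hz.2⟩)]
    rw [Int.card_Icc] at this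
    omega
  set Y := S ∩ Ioo u v
  have hSeq : S = Icc 0 (u - 1) ∪ Y ∪ Icc (v + 1) k := by
    ext z
    simp only [Y, mem_union, mem_Icc, mem_inter, mem_Ioo]
    constructor
    · intro hz
      have := hSk z hz
      have : z ≠ u := fun h => huS (h ▸ hz)
      have : z ≠ v := fun h => hvS (h ▸ hz)
      grind
    · rintro ((h | h) | h)
      exacts [hu (mem_Icc.2 h), h.1, hv (mem_Icc.2 h)]
  have hYev : Even #Y := by
    rcases huv.lt_or_eq with h | rfl
    · exact hG.2 u (mem_Icc.2 ⟨hu0, by omega⟩) v (mem_Icc.2 ⟨by omega, hvk⟩) huS hvS h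
    · simp [Y]
  have hcard := card_Icc_union_union_Icc (Y := Y) (α := 0) (β := u - 1) (γ := v + 1) (δ := k)
    (inter_subset_right.trans (Ioo_subset_Ioo (by omega) (by omega))) (by omega)
  rw [← hSeq, hS] at hcard
  have hY : IsPaired Y :=
    hG.isPaired_inter_Ioo_of_notMem_left (mem_Icc.2 ⟨hu0, by omega⟩) huS (by omega) hYev
  obtain ⟨c, hc⟩ := hYev
  refine mem_facets_of_eq_union (i := v + 1 - k) (r := m - c) (by omega) (by omega) hY
    (by omega) (fun y hy => ?_) (inter_subset_left.trans hG.1)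
    (by omega) (by omega) (by omega) (by omega) hSeq hS
  simp only [Y, mem_inter, mem_Ioo] at hy
  exact mem_Icc.2 ⟨by omega, by omega⟩


lemma Icc_sub_two_mul_mem_facets (hm : 1 ≤ m) (hk : 2 * m < k) :
    Icc ((k : ℤ) - 2 * m) k ∈ Facets m k k := by
  have hSeq : Icc ((k : ℤ) - 2 * m) k = Icc ((k : ℤ) - 2 * m) (k - 1) ∪ ∅ ∪ Icc (k : ℤ) k := by
    ext z
    simp only [mem_union, mem_Icc, notMem_empty, or_false]
    omega
  exact mem_facets_of_eq_union (i := k - 2 * m) (r := m) hm le_rfl ⟨∅, by simp, by simp⟩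
    (by simp) (empty_subset _) (empty_subset _)
    (by omega) (by omega) (by omega) (by omega) hSeq (by rw [Int.card_Icc]; omega)

lemma Icc_zero_two_mul_mem_facets (hm : 1 ≤ m) (hk : 2 * m < k) :
    Icc (0 : ℤ) (2 * m) ∈ Facets m k k := by
  have hSeq : Icc (0 : ℤ) (2 * m) = Icc (0 : ℤ) 0 ∪ ∅ ∪ Icc 1 (2 * (m : ℤ)) := by
    ext z
    simp only [mem_union, mem_Icc, notMem_empty, or_false]
    omega
  exact mem_facets_of_eq_union (i := 1 - k) (r := m) hm le_rfl ⟨∅, by simp, by simp⟩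
    (by simp) (empty_subset _) (empty_subset _)
    (by omega) (by omega) (by omega) (by omega) hSeq (by rw [Int.card_Icc]; omega)

lemma mem_facets_of_first_run (hG : IsGale 0 k S) (hS : #S = 2 * m + 1) (hkS : (k : ℤ) ∈ S)
    {a w : ℤ} (ha : 1 ≤ a) (hamin : ∀ z ∈ S, a ≤ z) (hw : Icc a (w - 1) ⊆ S) (hwS : w ∉ S)
    (haw : a < w) (hwk : w < k) : S ∈ Facets m k k := by
  set Y := S ∩ Ioo w k
  have hSeq : S = Icc a (w - 1) ∪ Y ∪ Icc k k := by
    ext z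
    simp only [Y, mem_union, mem_Icc, mem_inter, mem_Ioo]
    constructor
    · intro hz
      have := mem_Icc.1 (hG.1 hz)
      have := hamin z hz
      have : z ≠ w := fun h => hwS (h ▸ hz)
      grind
    · rintro ((h | h) | h)
      exacts [hw (mem_Icc.2 h), h.1, (show z = k by omega) ▸ hkS]
  have hrun : S ∩ Ioo (a - 1) w = Icc a (w - 1) := by
    ext z
    simp only [mem_inter, mem_Ioo, mem_Icc]
    exact ⟨fun ⟨hz, h⟩ => ⟨hamin z hz, by omega⟩, fun h => ⟨hw (mem_Icc.2 h), by omega, by omega⟩⟩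
  obtain ⟨r, hr⟩ := hrun ▸ hG.2 (a - 1) (mem_Icc.2 ⟨by omega, by omega⟩) w
    (mem_Icc.2 ⟨by omega, by omega⟩) (fun h => by have := hamin _ h; omega) hwS (by omega)
  rw [Int.card_Icc] at hr
  have hcard := card_Icc_union_union_Icc (Y := Y) (α := a) (β := w - 1) (γ := k) (δ := k)
    (inter_subset_right.trans (Ioo_subset_Ioo (by omega) le_rfl)) (by omega)
  rw [← hSeq, hS] at hcard
  have hYev : Even #Y := ⟨m - r, by omega⟩
  have hY : IsPaired Y :=
    hG.isPaired_inter_Ioo_of_notMem_left (mem_Icc.2 ⟨by omega, by omega⟩) hwS (by omega) hYev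
  refine mem_facets_of_eq_union (i := a) (r := r) (by omega) (by omega) hY (by omega)
    (fun y hy => ?_) (inter_subset_left.trans hG.1)
    (by omega) (by omega) (by omega) (by omega) hSeq hS
  simp only [Y, mem_inter, mem_Ioo] at hy
  exact mem_Icc.2 ⟨by omega, by omega⟩

lemma mem_facets_of_last_run (hG : IsGale 0 k S) (hS : #S = 2 * m + 1) (h0 : 0 ∈ S)
    {b w : ℤ} (hb : b < k) (hbmax : ∀ z ∈ S, z ≤ b) (hw : Icc (w + 1) b ⊆ S) (hwS : w ∉ S)
    (hwb : w < b) (hw0 : 0 < w) : S ∈ Facets m k k := by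
  set Y := S ∩ Ioo 0 w
  have hSeq : S = Icc 0 0 ∪ Y ∪ Icc (w + 1) b := by
    ext z
    simp only [Y, mem_union, mem_Icc, mem_inter, mem_Ioo]
    constructor
    · intro hz
      have := mem_Icc.1 (hG.1 hz)
      have := hbmax z hz
      have : z ≠ w := fun h => hwS (h ▸ hz)
      grind
    · rintro ((h | h) | h)
      exacts [(show z = 0 by omega) ▸ h0, h.1, hw (mem_Icc.2 h)]
  have hrun : S ∩ Ioo w (b + 1) = Icc (w + 1) b := by
    ext z
    simp only [mem_inter, mem_Ioo, mem_Icc]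
    exact ⟨fun ⟨hz, h⟩ => ⟨by omega, hbmax z hz⟩, fun h => ⟨hw (mem_Icc.2 h), by omega, by omega⟩⟩
  obtain ⟨r, hr⟩ := hrun ▸ hG.2 w (mem_Icc.2 ⟨by omega, by omega⟩) (b + 1)
    (mem_Icc.2 ⟨by omega, by omega⟩) hwS (fun h => by have := hbmax _ h; omega) (by omega)
  rw [Int.card_Icc] at hr
  have hcard := card_Icc_union_union_Icc (Y := Y) (α := 0) (β := 0) (γ := w + 1) (δ := b)
    (inter_subset_right.trans (Ioo_subset_Ioo le_rfl (by omega))) (by omega)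
  rw [← hSeq, hS] at hcard
  have hYev : Even #Y := ⟨m - r, by omega⟩
  have hY : IsPaired Y :=
    hG.isPaired_inter_Ioo_of_notMem_right (mem_Icc.2 ⟨by omega, by omega⟩) hwS (by omega) hYev
  refine mem_facets_of_eq_union (i := w + 1 - k) (r := r) (by omega) (by omega) hY (by omega)
    (fun y hy => ?_) (inter_subset_left.trans hG.1)
    (by omega) (by omega) (by omega) (by omega) hSeq hS
  simp only [Y, mem_inter, mem_Ioo] at hy
  exact mem_Icc.2 ⟨by omega, by omega⟩

lemma mem_facets_of_zero_notMem (hG : IsGale 0 k S) (hS : #S = 2 * m + 1) (hm : 1 ≤ m)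
    (h0 : 0 ∉ S) (hkS : (k : ℤ) ∈ S) : S ∈ Facets m k k := by
  have hSk : ∀ z ∈ S, 0 ≤ z ∧ z ≤ k := fun z hz => mem_Icc.1 (hG.1 hz)
  obtain ⟨a, ha, hamin⟩ : ∃ a ∈ S, ∀ z ∈ S, a ≤ z :=
    ⟨S.min' ⟨k, hkS⟩, S.min'_mem _, fun z hz => S.min'_le z hz⟩
  have ha1 : 1 ≤ a := by
    have : a ≠ 0 := fun h => h0 (h ▸ ha)
    have := hSk a ha
    omega
  have hak := hamin k hkS
  obtain ⟨w, haw, hwS, hw⟩ := exists_gap_above S a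
  have haw' : a ≠ w := fun h => hwS (h ▸ ha)
  have hwk : w ≤ k + 1 := by
    by_contra! h
    have := hSk _ (hw (mem_Icc.2 ⟨(by omega : a ≤ k + 1), (by omega : (k : ℤ) + 1 ≤ w - 1)⟩))
    omega
  rcases hwk.lt_or_eq with hwk | rfl
  · have hwk' : w ≠ k := fun h => hwS (h ▸ hkS)
    exact mem_facets_of_first_run hG hS hkS ha1 hamin hw hwS
      (by omega) (by omega)
  · have hSa : S = Icc a k := by
      ext z
      refine ⟨fun hz => mem_Icc.2 ⟨hamin z hz, (hSk z hz).2⟩, fun hz => hw ?_⟩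
      rw [mem_Icc] at hz ⊢
      omega
    have hcard := hS
    rw [hSa, Int.card_Icc] at hcard
    rw [hSa, show a = k - 2 * m by omega]
    exact Icc_sub_two_mul_mem_facets hm (by omega)

lemma mem_facets_of_k_notMem (hG : IsGale 0 k S) (hS : #S = 2 * m + 1) (hm : 1 ≤ m)
    (h0 : 0 ∈ S) (hkS : (k : ℤ) ∉ S) : S ∈ Facets m k k := by
  have hSk : ∀ z ∈ S, 0 ≤ z ∧ z ≤ k := fun z hz => mem_Icc.1 (hG.1 hz)
  obtain ⟨b, hb, hbmax⟩ : ∃ b ∈ S, ∀ z ∈ S, z ≤ b :=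
    ⟨S.max' ⟨0, h0⟩, S.max'_mem _, fun z hz => S.le_max' z hz⟩
  have hbk : b ≠ k := fun h => hkS (h ▸ hb)
  have hb0 := hbmax 0 h0
  obtain ⟨w, hwb, hwS, hw⟩ := exists_gap_below S b
  have hwb' : w ≠ b := fun h => hwS (h ▸ hb)
  have hw1 : -1 ≤ w := by
    by_contra! h
    have := hSk _ (hw (mem_Icc.2 ⟨(by omega : w + 1 ≤ -1), by omega⟩))
    omega
  rcases hw1.lt_or_eq with hw1 | rfl
  · have hw0 : w ≠ 0 := fun h => hwS (h ▸ h0)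
    exact mem_facets_of_last_run hG hS h0 (by have := hSk b hb; omega) hbmax hw hwS
      (by omega) (by omega)
  · have hSb : S = Icc 0 b := by
      ext z
      refine ⟨fun hz => mem_Icc.2 ⟨(hSk z hz).1, hbmax z hz⟩, fun hz => hw ?_⟩
      rw [mem_Icc] at hz ⊢
      omega
    have hcard := hS
    rw [hSb, Int.card_Icc] at hcard
    rw [hSb, show b = 2 * m by omega]
    exact Icc_zero_two_mul_mem_facets hm (by have := hSk b hb; omega)
lemma mem_facets_of_isGale (hG : IsGale 0 k S) (hS : #S = 2 * m + 1) (hm : 1 ≤ m)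
    (hk : 2 * m + 1 ≤ k) : S ∈ Facets m k k := by
  by_cases h0 : (0 : ℤ) ∈ S <;> by_cases hkS : (k : ℤ) ∈ S
  · exact mem_facets_of_zero_mem_of_k_mem hG hS hk h0 hkS
  · exact mem_facets_of_k_notMem hG hS hm h0 hkS
  · exact mem_facets_of_zero_notMem hG hS hm h0 hkS
  · have hinter : S ∩ Ioo 0 k = S := inter_eq_left.2 fun z hz => by
      have := mem_Icc.1 (hG.1 hz)
      have : z ≠ 0 := fun h => h0 (h ▸ hz)
      have : z ≠ k := fun h => hkS (h ▸ hz)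
      exact mem_Ioo.2 ⟨by omega, by omega⟩
    obtain ⟨c, hc⟩ := hG.2 0 (mem_Icc.2 ⟨le_rfl, by omega⟩) k (mem_Icc.2 ⟨by omega, le_rfl⟩)
      h0 hkS (by omega)
    rw [hinter] at hc
    omega

end Facets

/-- with n = k, every X ∈ 𝒳_k(d,k) has |ret_k(X)| = d, and
ℱ(d,k,k) is exactly the collection of d-element Gale subsets of [0,k]. -/
theorem statement0 (m k : ℕ) (hm : 2 ≤ m) (hk : 2 * m + 1 ≤ k) :
    (∀ X : Finset ℤ, MemX m k k X → (retr k X).card = 2 * m + 1) ∧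
    Facets m k k = {F : Finset ℤ | F.card = 2 * m + 1 ∧ IsGale 0 k F} := by
  refine ⟨fun X hX => hX.card_retr_eq, Set.ext fun F => ⟨?_, fun ⟨hF, hG⟩ => ?_⟩⟩
  · rintro ⟨X, hX, rfl⟩
    exact ⟨hX.card_retr_eq, (hX.isPaired (by omega)).isGale_retr (by positivity)⟩
  · exact mem_facets_of_isGale hG hF (by omega) hk
end
end

section
/- If n ≥ k+1 and F_1, F_2 ∈ ℱ(d,k,n) with max F_1 ≥ k and max F_2 ≥ k, then F_1 ≺_c F_2 implies lsh(F_1) ≺_c lsh(F_2), where lsh(F) = ret_{n−1}(F − 1) and F − 1 = {x − 1 : x ∈ F}. -/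
noncomputable section

open Finset

/-! The shift `lsh` is induced by `x ↦ max 0 (x - 1)`, which is monotone, and injective on `[0, n]`
except that it identifies `0` and `1`. A monotone map preserves `F₁ ≺_c F₂` as long as it does
not identify the witness `z = max (F₁ ∆ F₂) ∈ F₂` with an element of `F₁`, so the only danger is
`{z, x} = {0, 1}` with `x ∈ F₁`. The block structure of facets whose maximum is at least `k`
excludes both cases: if `0 ∉ F₁ ∋ 1` and `0 ∈ F₂`, then `k ∉ F₁` but `k ∈ F₂`; if `1 ∉ F₁ ∋ 0` and
`1 ∈ F₂`, then `max F₁ = k`, hence `max F₂ = k`, which forces `1 ∉ F₂`. -/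

lemma maxElt_eq_max' {F : Finset ℤ} (hF : F.Nonempty) : maxElt F = F.max' hF := by
  rw [maxElt, ← Finset.coe_max' hF]
  rfl

lemma maxElt_mem {F : Finset ℤ} (hF : F.Nonempty) : maxElt F ∈ F := by
  rw [maxElt_eq_max' hF]
  exact F.max'_mem hF

lemma le_maxElt {F : Finset ℤ} {t : ℤ} (ht : t ∈ F) : t ≤ maxElt F := by
  rw [maxElt_eq_max' ⟨t, ht⟩]
  exact F.le_max' t ht

lemma maxElt_eq_of_mem_of_forall_le {F : Finset ℤ} {z : ℤ} (hz : z ∈ F) (h : ∀ t ∈ F, t ≤ z) :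
    maxElt F = z :=
  le_antisymm (h _ (maxElt_mem ⟨z, hz⟩)) (le_maxElt hz)

lemma maxElt_eq_of_agree_above {F₁ F₂ : Finset ℤ} {c : ℤ}
    (hagree : ∀ w, c < w → (w ∈ F₁ ↔ w ∈ F₂)) (hF₁ : F₁.Nonempty) (hF₂ : F₂.Nonempty)
    (hc₁ : c < maxElt F₁) (hc₂ : c < maxElt F₂) : maxElt F₁ = maxElt F₂ :=
  le_antisymm (le_maxElt ((hagree _ hc₁).1 (maxElt_mem hF₁)))
    (le_maxElt ((hagree _ hc₂).2 (maxElt_mem hF₂)))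

lemma colexLt_image_of_monotone {g : ℤ → ℤ} (hg : Monotone g) {F₁ F₂ : Finset ℤ} {z : ℤ}
    (hz₂ : z ∈ F₂) (hagree : ∀ w, z < w → (w ∈ F₁ ↔ w ∈ F₂))
    (hfiber : ∀ x ∈ F₁, g x ≠ g z) : ColexLt (F₁.image g) (F₂.image g) := by
  refine ⟨g z, mem_image_of_mem g hz₂, fun h => ?_, fun w hw => ?_⟩
  · obtain ⟨x, hx, hxz⟩ := mem_image.1 h
    exact hfiber x hx hxz
  · have above : ∀ x, g x = w → z < x := fun x hx =>
      lt_of_not_ge fun hxz => (hx ▸ hw).not_ge (hg hxz)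
    simp only [mem_image]
    exact ⟨fun ⟨x, hx, hxw⟩ => ⟨x, (hagree x (above x hxw)).1 hx, hxw⟩,
      fun ⟨x, hx, hxw⟩ => ⟨x, (hagree x (above x hxw)).2 hx, hxw⟩⟩

section Retraction

variable {n : ℤ} {X : Finset ℤ}

lemma mem_retr {t : ℤ} : t ∈ retr n X ↔ ∃ x ∈ X, max 0 (min n x) = t := by
  simp [retr]

lemma retr_subset_Icc (hn : 0 ≤ n) : retr n X ⊆ Icc 0 n := by
  intro t ht
  obtain ⟨x, -, rfl⟩ := mem_retr.1 ht
  simp only [mem_Icc]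
  omega

lemma mem_retr_iff_of_pos_of_lt {t : ℤ} (h0 : 0 < t) (hn : t < n) : t ∈ retr n X ↔ t ∈ X := by
  rw [mem_retr]
  refine ⟨fun ⟨x, hx, hxt⟩ => ?_, fun ht => ⟨t, ht, by omega⟩⟩
  rwa [show t = x by omega]

lemma zero_mem_retr_iff (hn : 0 < n) : 0 ∈ retr n X ↔ ∃ x ∈ X, x ≤ 0 := by
  rw [mem_retr]
  exact exists_congr fun x => and_congr_right fun _ => by omega

lemma maxElt_retr (hX : X.Nonempty) : maxElt (retr n X) = max 0 (min n (maxElt X)) := by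
  refine maxElt_eq_of_mem_of_forall_le (mem_retr.2 ⟨_, maxElt_mem hX, rfl⟩) fun t ht => ?_
  obtain ⟨x, hx, rfl⟩ := mem_retr.1 ht
  have := le_maxElt hx
  omega

lemma retr_image_sub_one (F : Finset ℤ) :
    retr n (F.image (· - 1)) = F.image fun x => max 0 (min n (x - 1)) := by
  rw [retr, image_image]
  rfl

end Retraction

def blockSet (k : ℕ) (i : ℤ) (r : ℕ) (Y : Finset ℤ) : Finset ℤ :=
  Icc i (i + 2 * r - 1) ∪ Y ∪ Icc (i + k) (i + k + 2 * r - 1)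

section Blocks

variable {k : ℕ} {i : ℤ} {r : ℕ} {Y : Finset ℤ}

lemma mem_blockSet {x : ℤ} : x ∈ blockSet k i r Y ↔
    (i ≤ x ∧ x ≤ i + 2 * r - 1) ∨ x ∈ Y ∨ (i + k ≤ x ∧ x ≤ i + k + 2 * r - 1) := by
  simp [blockSet]

lemma bounds_of_mem_blockSet (hY : Y ⊆ Icc (i + 2 * r + 1) (i + k - 2)) {x : ℤ}
    (hx : x ∈ blockSet k i r Y) : i ≤ x ∧ x ≤ i + k + 2 * r - 1 := by
  rcases mem_blockSet.1 hx with h | h | h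
  · omega
  · have := mem_Icc.1 (hY h)
    omega
  · omega

lemma maxElt_blockSet (hY : Y ⊆ Icc (i + 2 * r + 1) (i + k - 2)) (hr : 1 ≤ r) :
    maxElt (blockSet k i r Y) = i + k + 2 * r - 1 :=
  maxElt_eq_of_mem_of_forall_le (mem_blockSet.2 (Or.inr (Or.inr ⟨by omega, le_rfl⟩)))
    fun _ hx => (bounds_of_mem_blockSet hY hx).2

end Blocks

namespace Facets

variable {m k n : ℕ} {F : Finset ℤ}

lemma exists_blockSet (hF : F ∈ Facets m k n) :
    ∃ (i : ℤ) (r : ℕ) (Y : Finset ℤ), 1 ≤ r ∧ r ≤ m ∧ Y ⊆ Icc (i + 2 * r + 1) (i + k - 2) ∧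
      F = retr n (blockSet k i r Y) := by
  obtain ⟨X, ⟨i, r, Y, hr, hrm, -, -, hY, rfl, -⟩, rfl⟩ := hF
  exact ⟨i, r, Y, hr, hrm, hY, rfl⟩

lemma subset_Icc (hF : F ∈ Facets m k n) : F ⊆ Icc 0 (n : ℤ) := by
  obtain ⟨i, r, Y, -, -, -, rfl⟩ := exists_blockSet hF
  exact retr_subset_Icc n.cast_nonneg

lemma exists_blocks (hF : F ∈ Facets m k n) (hn : 0 < n) :
    ∃ (i : ℤ) (r : ℕ) (Y : Finset ℤ), 1 ≤ r ∧ r ≤ m ∧ Y ⊆ Icc (i + 2 * r + 1) (i + k - 2) ∧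
      (0 ∈ F ↔ i ≤ 0) ∧
      (∀ t : ℤ, 0 < t → t < n → (t ∈ F ↔
        (i ≤ t ∧ t ≤ i + 2 * r - 1) ∨ t ∈ Y ∨ (i + k ≤ t ∧ t ≤ i + k + 2 * r - 1))) ∧
      maxElt F = max 0 (min (n : ℤ) (i + k + 2 * r - 1)) := by
  obtain ⟨i, r, Y, hr, hrm, hY, rfl⟩ := exists_blockSet hF
  have hne : (blockSet k i r Y).Nonempty := ⟨i, mem_blockSet.2 (Or.inl ⟨le_rfl, by omega⟩)⟩
  refine ⟨i, r, Y, hr, hrm, hY, ?_, fun t h0 htn => ?_, ?_⟩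
  · rw [zero_mem_retr_iff (by omega)]
    exact ⟨fun ⟨x, hx, hx0⟩ => (bounds_of_mem_blockSet hY hx).1.trans hx0,
      fun hi => ⟨i, mem_blockSet.2 (Or.inl ⟨le_rfl, by omega⟩), hi⟩⟩
  · rw [mem_retr_iff_of_pos_of_lt h0 htn, mem_blockSet]
  · rw [maxElt_retr hne, maxElt_blockSet hY hr]

lemma k_mem_of_zero_mem (hF : F ∈ Facets m k n) (hk : 2 * m + 1 ≤ k) (hn : k + 1 ≤ n)
    (hmax : (k : ℤ) ≤ maxElt F) (h0 : 0 ∈ F) : (k : ℤ) ∈ F := by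
  obtain ⟨i, r, Y, -, -, -, hzero, hmem, hmaxElt⟩ := exists_blocks hF (by omega)
  have hi := hzero.1 h0
  exact (hmem k (by omega) (by omega)).2 (Or.inr (Or.inr ⟨by omega, by omega⟩))

lemma k_notMem_of_zero_notMem_of_one_mem (hF : F ∈ Facets m k n) (hk : 2 * m + 1 ≤ k)
    (hn : k + 1 ≤ n) (h0 : 0 ∉ F) (h1 : 1 ∈ F) : (k : ℤ) ∉ F := by
  obtain ⟨i, r, Y, -, hrm, hY, hzero, hmem, -⟩ := exists_blocks hF (by omega)
  have hi : 0 < i := lt_of_not_ge (mt hzero.2 h0)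
  have hi1 : i = 1 := by
    rcases (hmem 1 one_pos (by omega)).1 h1 with h | h | h
    · omega
    · have := mem_Icc.1 (hY h)
      omega
    · omega
  rw [hmem k (by omega) (by omega)]
  rintro (h | h | h)
  · omega
  · have := mem_Icc.1 (hY h)
    omega
  · omega

lemma maxElt_eq_of_zero_mem_of_one_notMem (hF : F ∈ Facets m k n) (hk : 2 * m + 1 ≤ k)
    (hn : k + 1 ≤ n) (hmax : (k : ℤ) ≤ maxElt F) (h0 : 0 ∈ F) (h1 : 1 ∉ F) : maxElt F = k := by
  obtain ⟨i, r, Y, -, -, -, hzero, hmem, hmaxElt⟩ := exists_blocks hF (by omega)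
  have hi := hzero.1 h0
  have hend : i + 2 * r - 1 = 0 := by
    by_contra hne
    exact h1 ((hmem 1 one_pos (by omega)).2 (Or.inl ⟨by omega, by omega⟩))
  omega

lemma one_notMem_of_maxElt_eq (hF : F ∈ Facets m k n) (hk : 2 * m + 1 ≤ k) (hn : k + 1 ≤ n)
    (hmax : maxElt F = k) : 1 ∉ F := by
  obtain ⟨i, r, Y, -, hrm, hY, -, hmem, hmaxElt⟩ := exists_blocks hF (by omega)
  rw [hmem 1 one_pos (by omega)]
  rintro (h | h | h)
  · omega
  · have := mem_Icc.1 (hY h)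
    omega
  · omega

end Facets

/-- if n ≥ k+1 and F₁, F₂ ∈ ℱ(d,k,n) both have maximum ≥ k, then
F₁ ≺_c F₂ implies lsh(F₁) ≺_c lsh(F₂), where lsh(F) = ret_{n-1}(F - 1). -/
theorem statement2 (m k n : ℕ) (hm : 2 ≤ m) (hk : 2 * m + 1 ≤ k) (hn : k + 1 ≤ n)
    (F₁ F₂ : Finset ℤ) (h1 : F₁ ∈ Facets m k n) (h2 : F₂ ∈ Facets m k n)
    (hm1 : (k : ℤ) ≤ maxElt F₁) (hm2 : (k : ℤ) ≤ maxElt F₂)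
    (hlt : ColexLt F₁ F₂) :
    ColexLt (retr ((n - 1 : ℕ) : ℤ) (F₁.image (· - 1)))
      (retr ((n - 1 : ℕ) : ℤ) (F₂.image (· - 1))) := by
  obtain ⟨z, hz₂, hz₁, hagree⟩ := hlt
  have hn1 : ((n - 1 : ℕ) : ℤ) = n - 1 := by omega
  rw [retr_image_sub_one, retr_image_sub_one]
  refine colexLt_image_of_monotone (fun a b hab => by omega) hz₂ hagree fun x hx hxz => ?_
  have hx' := mem_Icc.1 (Facets.subset_Icc h1 hx)
  have hz' := mem_Icc.1 (Facets.subset_Icc h2 hz₂)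
  have hxz : (x = 1 ∧ z = 0) ∨ (x = 0 ∧ z = 1) := by
    have := ne_of_mem_of_not_mem hx hz₁
    omega
  rcases hxz with ⟨rfl, rfl⟩ | ⟨rfl, rfl⟩
  · exact Facets.k_notMem_of_zero_notMem_of_one_mem h1 hk hn hz₁ hx
      ((hagree k (by omega)).2 (Facets.k_mem_of_zero_mem h2 hk hn hm2 hz₂))
  · have hmax₁ := Facets.maxElt_eq_of_zero_mem_of_one_notMem h1 hk hn hm1 hx hz₁
    have hmax₂ : maxElt F₂ = k :=
      hmax₁ ▸ (maxElt_eq_of_agree_above hagree ⟨0, hx⟩ ⟨1, hz₂⟩ (by omega) (by omega)).symm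
    exact Facets.one_notMem_of_maxElt_eq h2 hk hn hmax₂ hz₂
end
end

section
/- Let n ≥ k+1. For every i with 0 ≤ i ≤ d, the number of F ∈ ℱ(d,k,n) with |G_F| = i equals the number of F ∈ ℱ(d,k,n−1) with |G_F| = i (with G_F computed with respect to the parameters (d,k,n−1)) plus the number of F ∈ ℱ(d,k,n) with max F = n−1 and |G_F| = i. (Equivalently, h′_i(P^{d,k,n}) = h′_i(P^{d,k,n−1}) + #{facets F of P^{d,k,n} : max F = n−1 and |G_F| = i}, where h′ denotes the h-vector the polytope would have were it simplicial.) -/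
noncomputable section

open Finset

/-!
The facets of `P^{d,k,n}` with `max F ≤ n - 2` are exactly those of `P^{d,k,n-1}` with
`max F ≤ n - 2`, with the same `G_F`. The facets with `max F = n` correspond bijectively to the
facets of `P^{d,k,n-1}` with `max F = n - 1` under `x ↦ max 0 (x - 1)`, which maps `ret_n X` to
`ret_{n-1} (X - 1)`. For such `F`, `0 ∈ F` forces `[0, n-k] ⊆ F`; hence the map is the
translation by `-1` of `F \ {0}`, and `0` lies in `A^0(F)`, so deleting it leaves `G_F` unchanged.
Injectivity holds because `0 ∈ F ↔ 1 ∈ F ∧ k ∈ F`.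
-/

section Translation

variable {S : Finset ℤ} {c : ℤ}

lemma mem_image_add_right {y : ℤ} : y ∈ S.image (· + c) ↔ y - c ∈ S := by
  simp [sub_eq_add_neg]

lemma Icc_subset_image_add_right {a b : ℤ} :
    Icc a b ⊆ S.image (· + c) ↔ Icc (a - c) (b - c) ⊆ S := by
  constructor
  · intro h z hz
    have := @h (z + c) (by simp only [mem_Icc] at hz ⊢; omega)
    simpa [mem_image_add_right] using this
  · intro h z hz
    exact mem_image_add_right.2 (h (by simp only [mem_Icc] at hz ⊢; omega))

lemma mem_runOf {F : Finset ℤ} {x y : ℤ} :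
    y ∈ runOf F x ↔ y ∈ F ∧ Icc (min x y) (max x y) ⊆ F :=
  mem_filter

lemma runOf_image_add_right (x : ℤ) :
    runOf (S.image (· + c)) (x + c) = (runOf S x).image (· + c) := by
  ext y
  rw [mem_image_add_right, mem_runOf, mem_runOf, mem_image_add_right,
    Icc_subset_image_add_right, ← min_sub_sub_right, ← max_sub_sub_right, add_sub_cancel_right]

lemma mem_Epos {y : ℤ} :
    y ∈ Epos S ↔ y ∈ S ∧ ∃ a, Icc a y ⊆ S ∧ a - 1 ∉ S ∧ Odd (y - a) :=
  @mem_filter _ _ (Classical.decPred _) _ _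

lemma Epos_image_add_right : Epos (S.image (· + c)) = (Epos S).image (· + c) := by
  ext y
  simp only [mem_Epos, mem_image_add_right, Icc_subset_image_add_right]
  constructor
  · rintro ⟨hy, a, ha, ha1, hodd⟩
    exact ⟨hy, a - c, ha, by rwa [sub_right_comm], by rwa [sub_sub_sub_cancel_right]⟩
  · rintro ⟨hy, a, ha, ha1, hodd⟩
    refine ⟨hy, a + c, by rwa [add_sub_cancel_right], by rwa [sub_right_comm, add_sub_cancel_right],
      by rwa [sub_add_eq_sub_sub, sub_right_comm]⟩

end Translation

section Greatest

variable {S : Finset ℤ} {k N : ℤ}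

lemma le_maxElt_s10 {x : ℤ} (h : x ∈ S) : x ≤ maxElt S := by
  obtain ⟨M, hM⟩ := Finset.max_of_mem h
  simpa [maxElt, hM] using Finset.le_max_of_eq h hM

lemma maxElt_eq_of_isGreatest (h : IsGreatest (S : Set ℤ) N) : maxElt S = N := by
  have hmax : S.max = N := le_antisymm (Finset.max_le fun b hb => WithBot.coe_le_coe.2 (h.2 hb))
    (Finset.le_max h.1)
  simp [maxElt, hmax]

lemma maxElt_mem_s10 (h : S.Nonempty) : maxElt S ∈ S := by
  obtain ⟨M, hM⟩ := Finset.max_of_nonempty h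
  simpa [maxElt, hM] using Finset.mem_of_max hM

lemma runOf_eq_empty {x : ℤ} (h : x ∉ S) : runOf S x = ∅ :=
  filter_false_of_mem fun y _ hsub => h (hsub (by simp))

lemma A0_eq_runOf (h : IsGreatest (S : Set ℤ) N) (hk : k ≤ N) : A0 k N S = runOf S (N - k) := by
  rw [A0, maxElt_eq_of_isGreatest h, if_neg (by omega), if_neg (by omega)]
  split_ifs with hNk
  · rfl
  · exact (runOf_eq_empty hNk).symm

lemma GF_eq_of_isGreatest (h : IsGreatest (S : Set ℤ) N) (hk : k ≤ N) :
    GF k N S = Epos (S \ (runOf S (N - k) ∪ runOf S N)) ∪ runOf S N := by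
  rw [GF, A0_eq_runOf h hk]

lemma GF_image_add_right (h : IsGreatest (S : Set ℤ) N) (c : ℤ) (hk : k ≤ N) (hkc : k ≤ N + c) :
    GF k (N + c) (S.image (· + c)) = (GF k N S).image (· + c) := by
  have hc : IsGreatest ((S.image (· + c) : Finset ℤ) : Set ℤ) (N + c) := by
    rw [coe_image]
    exact Monotone.map_isGreatest (fun _ _ hab => by simpa using hab) h
  have hinj : Function.Injective (· + c) := add_left_injective c
  rw [GF_eq_of_isGreatest hc hkc, GF_eq_of_isGreatest h hk, show N + c - k = N - k + c by ring,
    runOf_image_add_right, runOf_image_add_right, ← image_union, ← image_sdiff _ _ hinj,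
    Epos_image_add_right, image_union]

lemma isGreatest_erase {a : ℤ} (h : IsGreatest (S : Set ℤ) N) (ha : N ≠ a) :
    IsGreatest ((S.erase a : Finset ℤ) : Set ℤ) N :=
  ⟨mem_erase.2 ⟨ha, h.1⟩, fun _ hz => h.2 (mem_of_mem_erase hz)⟩

lemma runOf_erase {a x : ℤ} (hS : ∀ z ∈ S, a ≤ z) (hx : a < x) :
    runOf (S.erase a) x = (runOf S x).erase a := by
  ext y
  simp only [mem_erase, mem_runOf]
  constructor
  · rintro ⟨⟨hya, hy⟩, hsub⟩
    exact ⟨hya, hy, hsub.trans (erase_subset a S)⟩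
  · rintro ⟨hya, hy, hsub⟩
    have hay : a < y := lt_of_le_of_ne (hS y hy) (Ne.symm hya)
    refine ⟨⟨hya, hy⟩, fun z hz => mem_erase.2 ⟨?_, hsub hz⟩⟩
    rw [mem_Icc] at hz
    omega

lemma GF_erase_zero (h : IsGreatest (S : Set ℤ) N) (hS : ∀ z ∈ S, 0 ≤ z) (hk : k < N)
    (h0 : 0 ∈ S → Icc 0 (N - k) ⊆ S ∧ ¬ Icc 0 N ⊆ S) : GF k N (S.erase 0) = GF k N S := by
  by_cases hS0 : 0 ∈ S
  swap
  · rw [erase_eq_of_notMem hS0]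
  obtain ⟨hlow, hgap⟩ := h0 hS0
  have hkpos : 0 < k := by
    by_contra hk0
    exact hgap (fun z hz => hlow (by simp only [mem_Icc] at hz ⊢; omega))
  have h' := isGreatest_erase h (a := 0) (by omega)
  have hA : 0 ∈ runOf S (N - k) := mem_runOf.2 ⟨hS0, by rwa [min_eq_right (by omega),
    max_eq_left (by omega)]⟩
  have hR : 0 ∉ runOf S N := fun h0N => hgap (by
    simpa [min_eq_right (by omega : (0:ℤ) ≤ N), max_eq_left (by omega : (0:ℤ) ≤ N)]
      using (mem_runOf.1 h0N).2)
  rw [GF_eq_of_isGreatest h' hk.le, GF_eq_of_isGreatest h hk.le, runOf_erase hS (by omega),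
    runOf_erase hS (by omega), erase_eq_of_notMem hR]
  congr 2
  ext y
  by_cases hy : y = 0 <;> simp [hy, hA]

end Greatest

section ShiftDown

def shiftDown (x : ℤ) : ℤ := max 0 (x - 1)

lemma retr_image_add_neg_one (n : ℤ) (X : Finset ℤ) :
    retr n (X.image (· + -1)) = (retr (n + 1) X).image shiftDown := by
  simp only [retr, image_image]
  exact image_congr fun x _ => by simp only [Function.comp_apply, shiftDown]; omega

variable {F F' : Finset ℤ}

lemma image_shiftDown_eq (hF : ∀ x ∈ F, 0 ≤ x) (h01 : 0 ∈ F → 1 ∈ F) :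
    F.image shiftDown = (F.erase 0).image (· + -1) := by
  ext y
  rw [mem_image_add_right]
  simp only [mem_erase, mem_image, shiftDown]
  constructor
  · rintro ⟨x, hx, rfl⟩
    rcases (hF x hx).eq_or_lt with rfl | hpos
    · exact ⟨by norm_num, by simpa using h01 hx⟩
    · exact ⟨by omega, by rwa [show max 0 (x - 1) - -1 = x by omega]⟩
  · rintro ⟨hy0, hy⟩
    exact ⟨y - -1, hy, by have := hF _ hy; omega⟩

lemma eq_of_image_shiftDown_eq {k : ℤ} (hk : 2 ≤ k) (hF : ∀ x ∈ F, 0 ≤ x)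
    (hF' : ∀ x ∈ F', 0 ≤ x) (h0 : 0 ∈ F ↔ 1 ∈ F ∧ k ∈ F) (h0' : 0 ∈ F' ↔ 1 ∈ F' ∧ k ∈ F')
    (h : F.image shiftDown = F'.image shiftDown) : F = F' := by
  rw [image_shiftDown_eq hF fun h => (h0.1 h).1, image_shiftDown_eq hF' fun h => (h0'.1 h).1]
    at h
  have herase := image_injective (add_left_injective (-1 : ℤ)) h
  have hne : ∀ x : ℤ, x ≠ 0 → (x ∈ F ↔ x ∈ F') := fun x hx => by
    simpa [hx] using congrArg (x ∈ ·) herase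
  ext x
  rcases eq_or_ne x 0 with rfl | hx
  · rw [h0, h0', hne 1 one_ne_zero, hne k (by omega)]
  · exact hne x hx

end ShiftDown

section Facets

variable {m k n n' : ℕ} {X F : Finset ℤ}

lemma IsPaired.image_add_right {Y : Finset ℤ} (h : IsPaired Y) (c : ℤ) :
    IsPaired (Y.image (· + c)) := by
  obtain ⟨S, rfl, hsep⟩ := h
  refine ⟨S.image (· + c), ?_, ?_⟩
  · rw [image_union, image_image, image_image]
    congr 2
    funext x
    exact add_right_comm x 1 c
  simp only [mem_image]
  rintro _ ⟨a, ha, rfl⟩ _ ⟨b, hb, rfl⟩ hab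
  simpa using hsep a ha b hb (by rintro rfl; exact hab rfl)

lemma MemX.image_add_right (hX : MemX m k n X) (c : ℤ)
    (hcard : 2 * m + 1 ≤ (retr n' (X.image (· + c))).card) : MemX m k n' (X.image (· + c)) := by
  obtain ⟨i, r, Y, hr, hrm, hY, hYcard, hYsub, rfl, -⟩ := hX
  refine ⟨i + c, r, Y.image (· + c), hr, hrm, IsPaired.image_add_right hY c,
    by rw [card_image_of_injective _ (add_left_injective c), hYcard], ?_, ?_, hcard⟩
  · intro y hy
    have := mem_Icc.1 (hYsub (mem_image_add_right.1 hy))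
    rw [mem_Icc]
    omega
  · simp only [image_union, image_add_right_Icc]
    rw [show i + 2 * r - 1 + c = i + c + 2 * r - 1 by ring, show i + k + c = i + c + k by ring,
      show i + k + 2 * r - 1 + c = i + c + k + 2 * r - 1 by ring]

lemma retr_subset_Icc_s10 {N : ℤ} (hN : 0 ≤ N) (X : Finset ℤ) : retr N X ⊆ Icc 0 N := by
  intro y hy
  obtain ⟨x, -, rfl⟩ := mem_image.1 hy
  rw [mem_Icc]
  omega

lemma Facets.subset_Icc_s10 (hF : F ∈ Facets m k n) : F ⊆ Icc 0 (n : ℤ) := by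
  obtain ⟨X, -, rfl⟩ := hF
  exact retr_subset_Icc_s10 (by positivity) X

lemma Facets.le_card (hF : F ∈ Facets m k n) : 2 * m + 1 ≤ F.card := by
  obtain ⟨X, ⟨i, r, Y, -, -, -, -, -, -, hcard⟩, rfl⟩ := hF
  exact hcard

lemma Facets.nonempty (hF : F ∈ Facets m k n) : F.Nonempty :=
  card_pos.1 (by have := Facets.le_card hF; omega)

lemma Facets.isGreatest_iff (hF : F ∈ Facets m k n) :
    IsGreatest (F : Set ℤ) n ↔ (n : ℤ) ∈ F :=
  ⟨fun h => h.1, fun h => ⟨h, fun _ hy => (mem_Icc.1 (Facets.subset_Icc_s10 hF hy)).2⟩⟩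

lemma Facets.maxElt_le (hF : F ∈ Facets m k n) : maxElt F ≤ n :=
  (mem_Icc.1 (Facets.subset_Icc_s10 hF (maxElt_mem_s10 (Facets.nonempty hF)))).2

lemma Facets.maxElt_eq_iff (hF : F ∈ Facets m k n) : maxElt F = n ↔ (n : ℤ) ∈ F :=
  ⟨fun h => h ▸ maxElt_mem_s10 (Facets.nonempty hF),
    fun h => maxElt_eq_of_isGreatest ((Facets.isGreatest_iff hF).2 h)⟩

lemma Facets.finite : (Facets m k n).Finite :=
  (Icc 0 (n : ℤ)).powerset.finite_toSet.subset fun _ hF =>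
    mem_coe.2 (mem_powerset.2 (Facets.subset_Icc_s10 hF))

lemma retr_congr {N N' : ℤ} (h : ∀ y ∈ retr N X, y < N) (h' : ∀ y ∈ retr N X, y < N') :
    retr N' X = retr N X :=
  image_congr fun x hx => by
    have := h _ (mem_image_of_mem _ hx)
    have := h' _ (mem_image_of_mem _ hx)
    omega

lemma mem_Facets_iff_of_lt (h : ∀ y ∈ F, y < n) (h' : ∀ y ∈ F, y < n') :
    F ∈ Facets m k n ↔ F ∈ Facets m k n' := by
  suffices ∀ {n n' : ℕ}, (∀ y ∈ F, y < n) → (∀ y ∈ F, y < n') →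
      F ∈ Facets m k n → F ∈ Facets m k n' from ⟨this h h', this h' h⟩
  rintro n n' h h' ⟨X, ⟨i, r, Y, hr, hrm, hY, hYcard, hYsub, hXeq, hcard⟩, rfl⟩
  rw [← retr_congr h h'] at hcard ⊢
  exact ⟨X, ⟨i, r, Y, hr, hrm, hY, hYcard, hYsub, hXeq, hcard⟩, rfl⟩

lemma GF_congr {K N N' : ℤ} (h : maxElt F < N) (h' : maxElt F < N') :
    GF K N F = GF K N' F := by
  have hN : N ∉ F := fun hN => by have := le_maxElt_s10 hN; omega
  have hN' : N' ∉ F := fun hN => by have := le_maxElt_s10 hN; omega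
  have hA : A0 K N F = A0 K N' F := by
    unfold A0
    split_ifs <;> first | rfl | omega
  rw [GF, GF, runOf_eq_empty hN, runOf_eq_empty hN', hA]

end Facets

structure TopFacetRep (m k n : ℕ) (i : ℤ) (r : ℕ) (Y F : Finset ℤ) : Prop where
  le_k : 2 * m + 1 ≤ k
  lt_n : k < n
  one_le_r : 1 ≤ r
  r_le_m : r ≤ m
  Y_subset : Y ⊆ Icc (i + 2 * r + 1) (i + k - 2)
  card_Y : Y.card = 2 * (m - r)
  eq_retr : F = retr n (Icc i (i + 2 * r - 1) ∪ Y ∪ Icc (i + k) (i + k + 2 * r - 1))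
  le_card : 2 * m + 1 ≤ F.card
  top_mem : (n : ℤ) ∈ F

lemma exists_topFacetRep {m k n : ℕ} {F : Finset ℤ} (hk : 2 * m + 1 ≤ k) (hkn : k < n)
    (hF : F ∈ Facets m k n) (htop : (n : ℤ) ∈ F) : ∃ i r Y, TopFacetRep m k n i r Y F := by
  obtain ⟨X, ⟨i, r, Y, hr, hrm, -, hYcard, hYsub, rfl, hcard⟩, rfl⟩ := hF
  exact ⟨i, r, Y, hk, hkn, hr, hrm, hYsub, hYcard, rfl, hcard, htop⟩

namespace TopFacetRep

variable {m k n : ℕ} {i : ℤ} {r : ℕ} {Y F : Finset ℤ} (h : TopFacetRep m k n i r Y F)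
include h

lemma subset_Icc_s10 : F ⊆ Icc 0 (n : ℤ) := by
  rw [h.eq_retr]
  exact retr_subset_Icc_s10 (by positivity) _

lemma nonneg : ∀ x ∈ F, 0 ≤ x := fun _ hx => (mem_Icc.1 (h.subset_Icc_s10 hx)).1

lemma isGreatest : IsGreatest (F : Set ℤ) n :=
  ⟨h.top_mem, fun _ hx => (mem_Icc.1 (h.subset_Icc_s10 hx)).2⟩

lemma mem_Y {y : ℤ} (hy : y ∈ Y) : i + 2 * r + 1 ≤ y ∧ y ≤ i + k - 2 :=
  mem_Icc.1 (h.Y_subset hy)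

lemma exists_mem_blocks_of_mem {y : ℤ} (hy : y ∈ F) :
    ∃ x, ((i ≤ x ∧ x ≤ i + 2 * r - 1) ∨ x ∈ Y ∨ (i + k ≤ x ∧ x ≤ i + k + 2 * r - 1)) ∧
      max 0 (min (n : ℤ) x) = y := by
  rw [h.eq_retr, retr, mem_image] at hy
  simpa [or_assoc] using hy

lemma mem_iff_of_pos_of_lt {y : ℤ} (h0 : 0 < y) (hn : y < n) :
    y ∈ F ↔ (i ≤ y ∧ y ≤ i + 2 * r - 1) ∨ y ∈ Y ∨ (i + k ≤ y ∧ y ≤ i + k + 2 * r - 1) := by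
  constructor
  · intro hy
    obtain ⟨x, hx, hxy⟩ := h.exists_mem_blocks_of_mem hy
    obtain rfl : x = y := by omega
    exact hx
  · intro hy
    rw [h.eq_retr, retr, mem_image]
    exact ⟨y, by simpa [or_assoc] using hy, by omega⟩

lemma top_le : (n : ℤ) ≤ i + k + 2 * r - 1 := by
  obtain ⟨x, hx, hxn⟩ := h.exists_mem_blocks_of_mem h.top_mem
  have := h.lt_n
  rcases hx with hx | hx | hx
  · omega
  · have := h.mem_Y hx
    omega
  · omega

lemma two_le_add : 2 ≤ i + 2 * r := by
  have := h.top_le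
  have := h.lt_n
  omega

lemma zero_mem_iff : 0 ∈ F ↔ i ≤ 0 := by
  have := h.lt_n
  have := h.one_le_r
  constructor
  · intro h0
    obtain ⟨x, hx, hx0⟩ := h.exists_mem_blocks_of_mem h0
    have := h.two_le_add
    rcases hx with hx | hx | hx
    · omega
    · have := h.mem_Y hx
      omega
    · omega
  · intro hi
    rw [h.eq_retr, retr, mem_image]
    exact ⟨i, by simp; omega, by omega⟩

lemma zero_mem_iff_one_mem_and_k_mem : 0 ∈ F ↔ 1 ∈ F ∧ (k : ℤ) ∈ F := by
  have := h.le_k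
  have := h.lt_n
  have := h.two_le_add
  have := h.r_le_m
  rw [h.zero_mem_iff, h.mem_iff_of_pos_of_lt one_pos (by omega),
    h.mem_iff_of_pos_of_lt (by omega) (by omega)]
  constructor
  · intro hi
    exact ⟨Or.inl (by omega), Or.inr (Or.inr (by omega))⟩
  · rintro ⟨h1 | h1 | h1, hk⟩
    · rcases hk with hk | hk | hk
      · omega
      · have := h.mem_Y hk
        omega
      · omega
    · have := h.mem_Y h1
      omega
    · omega

lemma image_shiftDown_eq_image_erase : F.image shiftDown = (F.erase 0).image (· + -1) :=
  image_shiftDown_eq h.nonneg fun h0 => (h.zero_mem_iff_one_mem_and_k_mem.1 h0).1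

lemma Icc_subset_of_zero_mem (h0 : 0 ∈ F) : Icc 0 ((n : ℤ) - k) ⊆ F := by
  have hi := h.zero_mem_iff.1 h0
  have := h.top_le
  have := h.le_k
  intro z hz
  rw [mem_Icc] at hz
  rcases hz.1.eq_or_lt with rfl | hz0
  · exact h0
  · exact (h.mem_iff_of_pos_of_lt hz0 (by omega)).2 (Or.inl (by omega))

lemma not_Icc_subset_of_zero_mem (h0 : 0 ∈ F) : ¬ Icc 0 (n : ℤ) ⊆ F := by
  have hi := h.zero_mem_iff.1 h0
  have := h.two_le_add
  have := h.le_k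
  have := h.lt_n
  have := h.r_le_m
  intro hsub
  have hgap := hsub (mem_Icc.2 ⟨by omega, by omega⟩ : i + 2 * r ∈ Icc 0 (n : ℤ))
  rcases (h.mem_iff_of_pos_of_lt (by omega) (by omega)).1 hgap with hg | hg | hg
  · omega
  · have := h.mem_Y hg
    omega
  · omega

lemma le_card_erase_zero : 2 * m + 1 ≤ (F.erase 0).card := by
  by_cases h0 : 0 ∈ F
  swap
  · rw [erase_eq_of_notMem h0]
    exact h.le_card
  have hi := h.zero_mem_iff.1 h0
  have := h.two_le_add
  have := h.top_le
  have := h.le_k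
  have := h.lt_n
  have := h.r_le_m
  have hsub : Icc 1 (i + 2 * r - 1) ∪ Y ∪ Icc (i + k) n ⊆ F.erase 0 := by
    intro z hz
    simp only [mem_union, mem_Icc] at hz
    have hz_bounds : 0 < z ∧ z ≤ n := by
      rcases hz with (hz | hz) | hz
      · omega
      · have := h.mem_Y hz
        omega
      · omega
    refine mem_erase.2 ⟨hz_bounds.1.ne', ?_⟩
    rcases hz_bounds.2.eq_or_lt with rfl | hzn
    · exact h.top_mem
    · rw [h.mem_iff_of_pos_of_lt hz_bounds.1 hzn]
      rcases hz with (hz | hz) | hz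
      · exact Or.inl (by omega)
      · exact Or.inr (Or.inl hz)
      · exact Or.inr (Or.inr (by omega))
  have hdisj₁ : Disjoint (Icc 1 (i + 2 * r - 1)) Y := disjoint_left.2 fun z hz hY => by
    have := h.mem_Y hY
    rw [mem_Icc] at hz
    omega
  have hdisj₂ : Disjoint (Icc 1 (i + 2 * r - 1) ∪ Y) (Icc (i + k) n) :=
    disjoint_left.2 fun z hz hz' => by
      rw [mem_Icc] at hz'
      rcases mem_union.1 hz with hz | hY
      · rw [mem_Icc] at hz
        omega
      · have := h.mem_Y hY
        omega
  have hcard := card_le_card hsub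
  rw [card_union_of_disjoint hdisj₂, card_union_of_disjoint hdisj₁, Int.card_Icc, Int.card_Icc,
    h.card_Y] at hcard
  omega

end TopFacetRep

section TopFacets

variable {m k n : ℕ} {F : Finset ℤ}

lemma TopFacetRep.card_GF_image_shiftDown {i : ℤ} {r : ℕ} {Y : Finset ℤ}
    (h : TopFacetRep m k (n + 1) i r Y F) :
    (GF k n (F.image shiftDown)).card = (GF k (n + 1 : ℕ) F).card := by
  have hk := h.lt_n
  rw [h.image_shiftDown_eq_image_erase, show (n : ℤ) = (n + 1 : ℕ) + -1 by push_cast; ring,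
    GF_image_add_right (isGreatest_erase h.isGreatest (by positivity)) (-1) (by omega) (by omega),
    card_image_of_injective _ (add_left_injective _),
    GF_erase_zero h.isGreatest h.nonneg (by omega)
      fun h0 => ⟨h.Icc_subset_of_zero_mem h0, h.not_Icc_subset_of_zero_mem h0⟩]

lemma image_shiftDown_mem_Facets (hk : 2 * m + 1 ≤ k) (hkn : k ≤ n)
    (hF : F ∈ Facets m k (n + 1)) (htop : ((n + 1 : ℕ) : ℤ) ∈ F) :
    F.image shiftDown ∈ Facets m k n := by
  obtain ⟨i, r, Y, h⟩ := exists_topFacetRep hk (by omega) hF htop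
  obtain ⟨X, hX, rfl⟩ := hF
  have hretr : retr n (X.image (· + -1)) = (retr (n + 1 : ℕ) X).image shiftDown := by
    push_cast
    exact retr_image_add_neg_one n X
  have hcard : 2 * m + 1 ≤ (retr n (X.image (· + -1))).card := by
    rw [hretr, h.image_shiftDown_eq_image_erase, card_image_of_injective _ (add_left_injective _)]
    exact h.le_card_erase_zero
  exact ⟨_, MemX.image_add_right hX (-1) hcard, hretr.symm⟩

lemma exists_image_shiftDown_eq {G : Finset ℤ} (hn : 1 ≤ n) (hG : G ∈ Facets m k n)
    (htop : (n : ℤ) ∈ G) :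
    ∃ F ∈ Facets m k (n + 1), ((n + 1 : ℕ) : ℤ) ∈ F ∧ F.image shiftDown = G := by
  obtain ⟨X, hX, rfl⟩ := hG
  have hretr : (retr (n + 1 : ℕ) (X.image (· + 1))).image shiftDown = retr n X := by
    rw [Nat.cast_succ, ← retr_image_add_neg_one, image_image]
    simp
  have hcard : 2 * m + 1 ≤ (retr (n + 1 : ℕ) (X.image (· + 1))).card :=
    (Facets.le_card ⟨X, hX, rfl⟩).trans (hretr ▸ card_image_le)
  refine ⟨_, ⟨_, MemX.image_add_right hX 1 hcard, rfl⟩, ?_, hretr⟩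
  rw [← hretr, mem_image] at htop
  obtain ⟨y, hy, hyn⟩ := htop
  have := (mem_Icc.1 (retr_subset_Icc_s10 (by positivity) _ hy)).2
  obtain rfl : y = (n + 1 : ℕ) := by simp only [shiftDown] at hyn; push_cast at this ⊢; omega
  exact hy

lemma eq_of_image_shiftDown_eq_of_mem_Facets {F' : Finset ℤ} (hk : 2 * m + 1 ≤ k) (hkn : k ≤ n)
    (hF : F ∈ Facets m k (n + 1)) (hF' : F' ∈ Facets m k (n + 1))
    (htop : ((n + 1 : ℕ) : ℤ) ∈ F) (htop' : ((n + 1 : ℕ) : ℤ) ∈ F')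
    (h : F.image shiftDown = F'.image shiftDown) : F = F' := by
  obtain ⟨i, r, Y, hrep⟩ := exists_topFacetRep hk (by omega) hF htop
  obtain ⟨i', r', Y', hrep'⟩ := exists_topFacetRep hk (by omega) hF' htop'
  have := hrep.one_le_r
  have := hrep.r_le_m
  exact eq_of_image_shiftDown_eq (k := k) (by omega) hrep.nonneg hrep'.nonneg
    hrep.zero_mem_iff_one_mem_and_k_mem hrep'.zero_mem_iff_one_mem_and_k_mem h

lemma ncard_top_succ (hk : 2 * m + 1 ≤ k) (hkn : k ≤ n) (j : ℕ) :
    {F ∈ Facets m k (n + 1) | maxElt F = ((n + 1 : ℕ) : ℤ) ∧ (GF k (n + 1 : ℕ) F).card = j}.ncard =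
      {F ∈ Facets m k n | maxElt F = n ∧ (GF k n F).card = j}.ncard := by
  refine Set.ncard_congr (fun F _ => F.image shiftDown) ?_ ?_ ?_
  · rintro F ⟨hF, hmax, hj⟩
    rw [Facets.maxElt_eq_iff hF] at hmax
    obtain ⟨i, r, Y, hrep⟩ := exists_topFacetRep hk (by omega) hF hmax
    have hG := image_shiftDown_mem_Facets hk hkn hF hmax
    refine ⟨hG, (Facets.maxElt_eq_iff hG).2 (mem_image.2 ⟨_, hmax, ?_⟩),
      hrep.card_GF_image_shiftDown.trans hj⟩
    simp [shiftDown]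
  · rintro F F' ⟨hF, hmax, -⟩ ⟨hF', hmax', -⟩
    rw [Facets.maxElt_eq_iff hF] at hmax
    rw [Facets.maxElt_eq_iff hF'] at hmax'
    exact eq_of_image_shiftDown_eq_of_mem_Facets hk hkn hF hF' hmax hmax'
  · rintro G ⟨hG, hmax, hj⟩
    rw [Facets.maxElt_eq_iff hG] at hmax
    obtain ⟨F, hF, htop, rfl⟩ := exists_image_shiftDown_eq (by omega) hG hmax
    obtain ⟨i, r, Y, hrep⟩ := exists_topFacetRep hk (by omega) hF htop
    exact ⟨F, ⟨hF, (Facets.maxElt_eq_iff hF).2 htop, hrep.card_GF_image_shiftDown ▸ hj⟩, rfl⟩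

end TopFacets

section Levels

variable {m k n : ℕ} {F : Finset ℤ}

lemma mem_Facets_and_card_GF_iff {n' j : ℕ} (h : maxElt F < n) (h' : maxElt F < n') :
    (F ∈ Facets m k n ∧ (GF k n F).card = j) ↔ (F ∈ Facets m k n' ∧ (GF k n' F).card = j) := by
  rw [mem_Facets_iff_of_lt (n' := n') (fun y hy => (le_maxElt_s10 hy).trans_lt h)
    (fun y hy => (le_maxElt_s10 hy).trans_lt h'), GF_congr (N' := n') h h']

lemma sep_Facets_sdiff_maxElt_lt (P : Finset ℤ → Prop) :
    {F ∈ Facets m k n | P F} \ {F | maxElt F < n} = {F ∈ Facets m k n | maxElt F = n ∧ P F} := by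
  ext F
  simp only [Set.mem_sdiff, Set.mem_ofPred_eq, not_lt]
  exact ⟨fun ⟨⟨hF, hP⟩, hn⟩ => ⟨hF, (Facets.maxElt_le hF).antisymm hn, hP⟩,
    fun ⟨hF, hn, hP⟩ => ⟨⟨hF, hP⟩, hn.ge⟩⟩

lemma sep_Facets_succ_sdiff_maxElt_lt (P : Finset ℤ → Prop) :
    {F ∈ Facets m k (n + 1) | P F} \ {F | maxElt F < n} =
      {F ∈ Facets m k (n + 1) | maxElt F = ((n + 1 : ℕ) : ℤ) ∧ P F} ∪
        {F ∈ Facets m k (n + 1) | maxElt F = n ∧ P F} := by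
  ext F
  simp only [Set.mem_sdiff, Set.mem_union, Set.mem_ofPred_eq, not_lt]
  constructor
  · rintro ⟨⟨hF, hP⟩, hn⟩
    have := Facets.maxElt_le hF
    push_cast at this ⊢
    rcases (show maxElt F = n + 1 ∨ maxElt F = n by omega) with h | h
    exacts [Or.inl ⟨hF, h, hP⟩, Or.inr ⟨hF, h, hP⟩]
  · rintro (⟨hF, h, hP⟩ | ⟨hF, h, hP⟩)
    · exact ⟨⟨hF, hP⟩, by push_cast at h; omega⟩
    · exact ⟨⟨hF, hP⟩, h.ge⟩

end Levels

theorem statement10_general (m k n : ℕ) (hk : 2 * m + 1 ≤ k) (hn : k + 1 ≤ n)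
    (i : ℕ) :
    {F ∈ Facets m k n | (GF k n F).card = i}.ncard =
      {F ∈ Facets m k (n - 1) | (GF (k : ℤ) ((n - 1 : ℕ) : ℤ) F).card = i}.ncard +
      {F ∈ Facets m k n | maxElt F = (n : ℤ) - 1 ∧ (GF k n F).card = i}.ncard := by
  obtain ⟨n, rfl⟩ : ∃ n', n = n' + 1 := ⟨n - 1, by omega⟩
  rw [Nat.add_sub_cancel, show ((n + 1 : ℕ) : ℤ) - 1 = n by push_cast; ring]
  set L := {F : Finset ℤ | maxElt F < n}
  have hlow : {F ∈ Facets m k (n + 1) | (GF k (n + 1 : ℕ) F).card = i} ∩ L =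
      {F ∈ Facets m k n | (GF k n F).card = i} ∩ L := by
    ext F
    simp only [L, Set.mem_inter_iff, Set.mem_ofPred_eq, and_congr_left_iff]
    exact fun hL => mem_Facets_and_card_GF_iff (by push_cast; omega) hL
  have hfin : ∀ {n' : ℕ} (P : Finset ℤ → Prop), {F ∈ Facets m k n' | P F}.Finite :=
    fun _ => Facets.finite.subset (Set.sep_subset _ _)
  have hdisj : Disjoint
      {F ∈ Facets m k (n + 1) | maxElt F = ((n + 1 : ℕ) : ℤ) ∧ (GF k (n + 1 : ℕ) F).card = i}
      {F ∈ Facets m k (n + 1) | maxElt F = n ∧ (GF k (n + 1 : ℕ) F).card = i} :=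
    Set.disjoint_left.2 fun F ⟨_, h, _⟩ ⟨_, h', _⟩ => by push_cast at h; omega
  rw [← Set.ncard_inter_add_ncard_sdiff_eq_ncard _ L (hfin _),
    ← Set.ncard_inter_add_ncard_sdiff_eq_ncard _ L (hfin _), hlow, sep_Facets_succ_sdiff_maxElt_lt,
    sep_Facets_sdiff_maxElt_lt, Set.ncard_union_eq hdisj (hfin _) (hfin _),
    ncard_top_succ hk (by omega)]
  ring

/-- for n ≥ k+1 and 0 ≤ i ≤ d,
h'_i(P^{d,k,n}) = h'_i(P^{d,k,n-1}) + #{F ∈ ℱ(d,k,n) : max F = n-1, |G_F| = i},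
where h'_i counts the facets F with |G_F| = i. -/
theorem statement10 (m k n : ℕ) (hm : 2 ≤ m) (hk : 2 * m + 1 ≤ k) (hn : k + 1 ≤ n)
    (i : ℕ) (hi : i ≤ 2 * m + 1) :
    {F ∈ Facets m k n | (GF k n F).card = i}.ncard =
      {F ∈ Facets m k (n - 1) | (GF (k : ℤ) ((n - 1 : ℕ) : ℤ) F).card = i}.ncard +
      {F ∈ Facets m k n | maxElt F = (n : ℤ) - 1 ∧ (GF k n F).card = i}.ncard :=
  statement10_general m k n hk hn i
end
end

section
/- Let n ≥ d+k−1. For every F ∈ ℱ(d,k,n) with max F = n, the translate F − 1 = {x − 1 : x ∈ F} belongs to ℱ(d,k,n−1). -/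
noncomputable section

open Finset

/-!
The set `X ∈ 𝒳_n(d,k)` behind `F` lies within `k + d - 1` consecutive integers and reaches
`n ≥ d + k - 1`, so all its elements are positive. Translating `X` by `-1` therefore keeps it in
`𝒳_{n-1}(d,k)`, and since the clamping `ret_n` only acts on the ends, `ret_{n-1}(X - 1) = F - 1`.
-/

lemma Finset.image_sub_right_Icc {α : Type*} [AddCommGroup α] [PartialOrder α]
    [IsOrderedAddMonoid α] [LocallyFiniteOrder α] [DecidableEq α] (a b c : α) :
    (Icc a b).image (· - c) = Icc (a - c) (b - c) := by
  simp_rw [sub_eq_add_neg]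
  exact image_add_right_Icc a b (-c)

lemma IsPaired.image_sub {Y : Finset ℤ} (hY : IsPaired Y) (c : ℤ) :
    IsPaired (Y.image (· - c)) := by
  obtain ⟨S, rfl, hsep⟩ := hY
  refine ⟨S.image (· - c), ?_, ?_⟩
  · rw [image_union, image_image, image_image]
    refine congrArg _ (image_congr fun a _ => ?_)
    simp only [Function.comp_apply]
    ring
  · simp only [mem_image]
    rintro _ ⟨a, ha, rfl⟩ _ ⟨b, hb, rfl⟩ hab
    rw [sub_sub_sub_cancel_right]
    exact hsep a ha b hb fun h => hab (h ▸ rfl)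

lemma exists_le_of_mem_retr {n z : ℤ} {X : Finset ℤ} (hz : z ∈ retr n X) (hz0 : 0 < z) :
    ∃ x ∈ X, z ≤ x := by
  obtain ⟨x, hx, rfl⟩ := mem_image.mp hz
  exact ⟨x, hx, by omega⟩

lemma retr_image_sub {n c : ℤ} {X : Finset ℤ} (hc : 0 ≤ c) (hcn : c ≤ n) (hXc : ∀ x ∈ X, c ≤ x) :
    retr (n - c) (X.image (· - c)) = (retr n X).image (· - c) := by
  simp only [retr, image_image]
  exact image_congr fun x hx => by have := hXc x hx; simp only [Function.comp_apply]; omega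

namespace MemX

variable {m k n : ℕ} {X : Finset ℤ}

lemma nonempty (hX : MemX m k n X) : X.Nonempty := by
  obtain ⟨i, r, Y, hr, -, -, -, -, rfl, -⟩ := hX
  exact ⟨i, by simp only [mem_union, mem_Icc]; omega⟩

lemma sub_lt (hX : MemX m k n X) {x y : ℤ} (hx : x ∈ X) (hy : y ∈ X) : y - x < k + 2 * m := by
  obtain ⟨i, r, Y, -, hrm, -, -, hYsub, rfl, -⟩ := hX
  have hbounds : ∀ z ∈ Icc i (i + 2 * r - 1) ∪ Y ∪ Icc (i + k) (i + k + 2 * r - 1),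
      i ≤ z ∧ z ≤ i + k + 2 * r - 1 := by
    intro z hz
    rcases mem_union.mp hz with hz | hz
    · rcases mem_union.mp hz with hz | hz
      · rw [mem_Icc] at hz; omega
      · have := mem_Icc.mp (hYsub hz); omega
    · rw [mem_Icc] at hz; omega
  have := hbounds x hx
  have := hbounds y hy
  omega

lemma image_sub (hX : MemX m k n X) {c : ℕ} (hcn : c ≤ n) (hXc : ∀ x ∈ X, (c : ℤ) ≤ x) :
    MemX m k (n - c) (X.image (· - (c : ℤ))) := by
  obtain ⟨i, r, Y, hr, hrm, hY, hYcard, hYsub, rfl, hcard⟩ := hX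
  refine ⟨i - c, r, Y.image (· - (c : ℤ)), hr, hrm, hY.image_sub c, ?_, ?_, ?_, ?_⟩
  · rw [card_image_of_injective _ sub_left_injective, hYcard]
  · intro y hy
    obtain ⟨z, hz, rfl⟩ := mem_image.mp hy
    have := mem_Icc.mp (hYsub hz)
    rw [mem_Icc]; omega
  · rw [image_union, image_union, image_sub_right_Icc, image_sub_right_Icc,
      show i + 2 * (r : ℤ) - 1 - c = i - c + 2 * r - 1 by ring,
      show i + (k : ℤ) - c = i - c + k by ring,
      show i + (k : ℤ) + 2 * r - 1 - c = i - c + k + 2 * r - 1 by ring]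
  · rw [Nat.cast_sub hcn, retr_image_sub c.cast_nonneg (by exact_mod_cast hcn) hXc,
      card_image_of_injective _ sub_left_injective]
    exact hcard

end MemX

lemma retr_image_sub_mem_facets {m k n c : ℕ} {X : Finset ℤ} (hX : MemX m k n X) (hcn : c ≤ n)
    (hXc : ∀ x ∈ X, (c : ℤ) ≤ x) : (retr n X).image (· - (c : ℤ)) ∈ Facets m k (n - c) :=
  ⟨_, hX.image_sub hcn hXc, by
    rw [Nat.cast_sub hcn, retr_image_sub c.cast_nonneg (by exact_mod_cast hcn) hXc]⟩

theorem statement15_general (m k n : ℕ)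
    (hn : 2 * m + k ≤ n)
    (F : Finset ℤ) (hF : F ∈ Facets m k n) (hmax : maxElt F = (n : ℤ)) :
    F.image (· - 1) ∈ Facets m k (n - 1) := by
  obtain ⟨X, hX, rfl⟩ := hF
  obtain ⟨x₀, hx₀⟩ := hX.nonempty
  have hn_pos : 0 < n := by have := hX.sub_lt hx₀ hx₀; omega
  have hnF : (n : ℤ) ∈ retr n X := by
    simpa only [hmax] using maxElt_mem (F := retr n X) (hX.nonempty.image _)
  obtain ⟨y, hy, hny⟩ := exists_le_of_mem_retr hnF (by exact_mod_cast hn_pos)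
  have hX_pos : ∀ x ∈ X, ((1 : ℕ) : ℤ) ≤ x := fun x hx => by
    have := hX.sub_lt hx hy; omega
  simpa using retr_image_sub_mem_facets hX hn_pos hX_pos

/-- for n ≥ d+k-1 and F ∈ ℱ(d,k,n) with max F = n, the translate
F - 1 belongs to ℱ(d,k,n-1). -/
theorem statement15 (m k n : ℕ) (hm : 2 ≤ m) (hk : 2 * m + 1 ≤ k)
    (hn : 2 * m + k ≤ n)
    (F : Finset ℤ) (hF : F ∈ Facets m k n) (hmax : maxElt F = (n : ℤ)) :
    F.image (· - 1) ∈ Facets m k (n - 1) :=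
  statement15_general m k n hn F hF hmax
end
end
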